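/- arXiv:1512.04001 — 3 statements merged into one kernel-verified Lean document; each statement's English description precedes it below -/
import Mathlib

section
/- Let Γ be a linearly ordered set and let G be a truncation closed, cross sectional additive subgroup of the Hahn series group ℝ((t^Γ)). Let Z be the set of all x ∈ G such that the order type of the support of x, well-ordered by the reverse order > of Γ, is an infinite limit ordinal and the leading coefficient of x (its coefficient at the greatest element of its support) equals 1. Then G is generated as an additive group (equivalently, as a ℤ-module) by the set {r·t^y : y ∈ Γ, r ∈ ℝ, r·t^y ∈ G} ∪ Z. -/
universe u v

section Tree

variable {α : Type u}

/-- The set of strict tree-predecessors of `x` under the relation `s`. -/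
def treePred (s : α → α → Prop) (x : α) : Set α := {y | s y x}

/-- `⟨α, s⟩` is a tree: `s` is a strict partial order each of whose predecessor
sets is well-ordered by `s`. -/
structure IsTreeOrd (s : α → α → Prop) : Prop where
  irrefl : ∀ x, ¬ s x x
  trans : ∀ {x y z}, s x y → s y z → s x z
  predWO : ∀ x : α, IsWellOrder (treePred s x) fun a b => s a.1 b.1

/-- The tree-rank of `x`: the order type of its set of predecessors. -/
noncomputable def treeRank (s : α → α → Prop) (h : IsTreeOrd s) (x : α) : Ordinal :=
  @Ordinal.type (treePred s x) (fun a b => s a.1 b.1) (h.predWO x)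

/-- `y` is an immediate successor of `x`. -/
def IsImmSucc (s : α → α → Prop) (h : IsTreeOrd s) (x y : α) : Prop :=
  s x y ∧ treeRank s h y = treeRank s h x + 1

/-- `C` is a chain (a subclass totally ordered by `s`). -/
def IsTreeChain (s : α → α → Prop) (C : Set α) : Prop :=
  ∀ x ∈ C, ∀ y ∈ C, x ≠ y → s x y ∨ s y x

/-- `C` is a chain of limit length. -/
def IsLimitChain (s : α → α → Prop) (C : Set α) : Prop :=
  IsTreeChain s C ∧ ∃ hwo : IsWellOrder C fun a b => s a.1 b.1,
    Order.IsSuccLimit (@Ordinal.type C (fun a b => s a.1 b.1) hwo)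

/-- `y` is an immediate successor of the chain `C`. -/
def IsChainImmSucc (s : α → α → Prop) (h : IsTreeOrd s) (C : Set α) (y : α) : Prop :=
  (∀ x ∈ C, s x y) ∧
    IsLeast {o : Ordinal | ∀ x ∈ C, treeRank s h x < o} (treeRank s h y)

/-- `⟨α, s⟩` is a binary tree. -/
structure IsBinaryTree (s : α → α → Prop) : Prop where
  toIsTreeOrd : IsTreeOrd s
  succ_binary : ∀ x a b c : α, IsImmSucc s toIsTreeOrd x a → IsImmSucc s toIsTreeOrd x b →
    IsImmSucc s toIsTreeOrd x c → a = b ∨ a = c ∨ b = c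
  chain_succ_unique : ∀ C : Set α, IsLimitChain s C → ∀ y z : α,
    IsChainImmSucc s toIsTreeOrd C y → IsChainImmSucc s toIsTreeOrd C z → y = z

variable [LinearOrder α]

/-- `L_s(x)`: the predecessors of `x` lying below `x`. -/
def Lopts (s : α → α → Prop) (x : α) : Set α := {a | s a x ∧ a < x}

/-- `R_s(x)`: the predecessors of `x` lying above `x`. -/
def Ropts (s : α → α → Prop) (x : α) : Set α := {a | s a x ∧ x < a}

/-- `⟨α, <, s⟩` is a lexicographically ordered binary tree. -/
structure IsLexBinTree (s : α → α → Prop) : Prop where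
  toIsBinaryTree : IsBinaryTree s
  lex : ∀ x y : α, x ≠ y →
    ((¬ s x y ∧ ¬ s y x) ↔ ∃ z, s z x ∧ s z y ∧ (x < z ∧ z < y ∨ y < z ∧ z < x))

/-- `x = {L | R}`: `x` is the simplest element lying between `L` and `R`. -/
def IsSimplest (s : α → α → Prop) (L R : Set α) (x : α) : Prop :=
  (∀ l ∈ L, l < x) ∧ (∀ r ∈ R, x < r) ∧
    ∀ y, y ≠ x → (∀ l ∈ L, l < y) → (∀ r ∈ R, y < r) → s x y

/-- `B` is an initial subtree: it is closed under `s`-predecessors. -/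
def IsInitialSubtree (s : α → α → Prop) (B : Set α) : Prop :=
  ∀ x ∈ B, ∀ y, s y x → y ∈ B

end Tree

/-- s-hierarchical ordered group. -/
structure IsSHGroup (α : Type u) [AddCommGroup α] [LinearOrder α] [IsOrderedAddMonoid α] (s : α → α → Prop) : Prop where
  lexBin : IsLexBinTree s
  add_eq : ∀ x y : α, IsSimplest s
    ({z | ∃ x' ∈ Lopts s x, z = x' + y} ∪ {z | ∃ y' ∈ Lopts s y, z = x + y'})
    ({z | ∃ x'' ∈ Ropts s x, z = x'' + y} ∪ {z | ∃ y'' ∈ Ropts s y, z = x + y''})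
    (x + y)

/-- s-hierarchical ordered domain. -/
structure IsSHDomain (α : Type u) [CommRing α] [LinearOrder α] [IsStrictOrderedRing α] (s : α → α → Prop) : Prop where
  toIsSHGroup : IsSHGroup α s
  mul_eq : ∀ x y : α, IsSimplest s
    ({z | ∃ x' ∈ Lopts s x, ∃ y' ∈ Lopts s y, z = x' * y + x * y' - x' * y'} ∪
     {z | ∃ x'' ∈ Ropts s x, ∃ y'' ∈ Ropts s y, z = x'' * y + x * y'' - x'' * y''})
    ({z | ∃ x' ∈ Lopts s x, ∃ y'' ∈ Ropts s y, z = x' * y + x * y'' - x' * y''} ∪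
     {z | ∃ x'' ∈ Ropts s x, ∃ y' ∈ Lopts s y, z = x'' * y + x * y' - x'' * y'})
    (x * y)

/-- s-hierarchical ordered field. -/
def IsSHField (α : Type u) [Field α] [LinearOrder α] [IsStrictOrderedRing α] (s : α → α → Prop) : Prop :=
  IsSHDomain α s

section Hahn

variable {Γ : Type*} [LinearOrder Γ]

/-- The series `r·t^y` in `ℝ((t^Γ))` (represented with exponents in `Γᵒᵈ`, so that
supports are well-ordered under the reverse order `>` of `Γ`). -/
noncomputable def tpow (y : Γ) (r : ℝ) : HahnSeries Γᵒᵈ ℝ :=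
  HahnSeries.single (OrderDual.toDual y) r

/-- Truncation of a Hahn series at `γ`: keep exactly the coefficients at exponents `> γ`. -/
noncomputable def htrunc (x : HahnSeries Γᵒᵈ ℝ) (γ : Γ) : HahnSeries Γᵒᵈ ℝ where
  coeff g := if γ < OrderDual.ofDual g then x.coeff g else 0
  isPWO_support' := x.isPWO_support.mono (by
    intro g hg
    simp only [Function.mem_support] at hg ⊢
    intro h
    simp [h] at hg)

/-- The leading coefficient of a Hahn series: its coefficient at the greatest
element of its support (`0` for the zero series). -/
noncomputable def leadCoeff (x : HahnSeries Γᵒᵈ ℝ) : ℝ :=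
  letI := Classical.dec (x = 0)
  if h : x = 0 then 0
  else x.coeff (x.isWF_support.min (HahnSeries.support_nonempty_iff.2 h))

/-- A Hahn series is positive iff its leading coefficient is positive. -/
def HahnPos (x : HahnSeries Γᵒᵈ ℝ) : Prop := x ≠ 0 ∧ 0 < leadCoeff x

/-- The order type of the support of a Hahn series, well-ordered by the reverse
order of `Γ`. -/
noncomputable def suppOrderType (x : HahnSeries Γᵒᵈ ℝ) : Ordinal :=
  @Ordinal.type x.support (fun a b => (a : Γᵒᵈ) < (b : Γᵒᵈ))
    { trichotomous := fun a b h1 h2 => by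
        rcases lt_trichotomy (a : Γᵒᵈ) (b : Γᵒᵈ) with h | h | h
        · exact absurd h h1
        · exact Subtype.ext h
        · exact absurd h h2
      wf := x.isWF_support }

end Hahn

/-- The set of dyadic rational real numbers. -/
def Dyadics : Set ℝ := {x | ∃ (z : ℤ) (m : ℕ), x = z / 2 ^ m}

/-- `H` is an initial subgroup of `ℝ`: it is `{0}`, or `{z/2^m : z ∈ ℤ}` for some `m`,
or it contains all dyadic rationals. -/
def IsInitialRealSubgroup (H : Set ℝ) : Prop :=
  H = {0} ∨ (∃ m : ℕ, H = {x : ℝ | ∃ z : ℤ, x = (z : ℝ) / 2 ^ m}) ∨ Dyadics ⊆ H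
section Helpers

variable {Γ : Type u} [LinearOrder Γ]

/-- The canonical well-order instance on the support of a Hahn series. -/
def swo (x : HahnSeries Γᵒᵈ ℝ) :
    IsWellOrder x.support (fun a b => (a : Γᵒᵈ) < (b : Γᵒᵈ)) :=
  { trichotomous := fun a b h1 h2 => by
      rcases lt_trichotomy (a : Γᵒᵈ) (b : Γᵒᵈ) with h | h | h
      · exact absurd h h1
      · exact Subtype.ext h
      · exact absurd h h2
    wf := x.isWF_support }

theorem suppOrderType_def (x : HahnSeries Γᵒᵈ ℝ) :
    suppOrderType x
      = @Ordinal.type x.support (fun a b => (a : Γᵒᵈ) < (b : Γᵒᵈ)) (swo x) := rfl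

theorem suppOrderType_congr {x y : HahnSeries Γᵒᵈ ℝ} (h : x.support = y.support) :
    suppOrderType x = suppOrderType y := by
  rw [suppOrderType_def, suppOrderType_def]
  exact (@Ordinal.type_eq _ _ _ _ (swo x) (swo y)).mpr
    ⟨⟨Equiv.setCongr h, Iff.rfl⟩⟩

theorem suppOrderType_lt {x y : HahnSeries Γᵒᵈ ℝ} {m : Γᵒᵈ} (hm : m ∈ x.support)
    (h : y.support = {g ∈ x.support | g < m}) :
    suppOrderType y < suppOrderType x := by
  rw [suppOrderType_def, suppOrderType_def]
  refine @PrincipalSeg.ordinal_type_lt _ _ _ _ (swo y) (swo x) ?_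
  have hsub : y.support ⊆ x.support := by
    rw [h]; exact Set.sep_subset _ _
  refine ⟨⟨⟨Set.inclusion hsub, Set.inclusion_injective hsub⟩, Iff.rfl⟩, ⟨m, hm⟩, ?_⟩
  intro b
  constructor
  · rintro ⟨a, rfl⟩
    exact (show (a : Γᵒᵈ) ∈ {g ∈ x.support | g < m} from h ▸ a.2).2
  · intro hb
    exact ⟨⟨b.1, h ▸ (⟨b.2, hb⟩ : (b : Γᵒᵈ) ∈ {g ∈ x.support | g < m})⟩, rfl⟩

theorem suppOrderType_isLimit {x : HahnSeries Γᵒᵈ ℝ} (hne : x.support.Nonempty)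
    (hnomax : ∀ a ∈ x.support, ∃ b ∈ x.support, a < b) :
    Order.IsSuccLimit (suppOrderType x) := by
  letI := swo x
  rw [suppOrderType_def]
  rw [Ordinal.isSuccLimit_iff]; refine ⟨?_, Order.isSuccPrelimit_of_succ_lt ?_⟩
  · exact Ordinal.type_ne_zero_iff_nonempty.2 hne.to_subtype
  · intro a ha
    obtain ⟨b, rfl⟩ := Ordinal.typein_surj (fun a b : x.support => (a : Γᵒᵈ) < (b : Γᵒᵈ)) ha
    obtain ⟨c, hc, hbc⟩ := hnomax b.1 b.2
    have hlt : Ordinal.typein (fun a b : x.support => (a : Γᵒᵈ) < (b : Γᵒᵈ)) b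
        < Ordinal.typein (fun a b : x.support => (a : Γᵒᵈ) < (b : Γᵒᵈ)) ⟨c, hc⟩ :=
      (Ordinal.typein_lt_typein _).2 hbc
    exact lt_of_le_of_lt (Order.succ_le_of_lt hlt) (Ordinal.typein_lt_type _ _)

theorem htrunc_coeff (x : HahnSeries Γᵒᵈ ℝ) (γ : Γ) (g : Γᵒᵈ) :
    (htrunc x γ).coeff g = if γ < OrderDual.ofDual g then x.coeff g else 0 := rfl

end Helpers

/-- A truncation closed, cross sectional subgroup `G` of the Hahn series group
`ℝ((t^Γ))` is generated, as an additive group (equivalently, as a `ℤ`-module), by the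
monomials `r·t^y` belonging to `G` together with the set `Z` of members of `G` whose
support has infinite limit order type and whose leading coefficient is `1`. -/
theorem stmt9 {Γ : Type u} [LinearOrder Γ] (G : AddSubgroup (HahnSeries Γᵒᵈ ℝ))
    (htrunc : ∀ x ∈ G, ∀ γ : Γ, htrunc x γ ∈ G)
    (hcross : ∀ y : Γ, tpow y (1 : ℝ) ∈ G) :
    G = AddSubgroup.closure
      ({x | (∃ (y : Γ) (r : ℝ), x = tpow y r) ∧ x ∈ G} ∪
       {x | x ∈ G ∧ Order.IsSuccLimit (suppOrderType x) ∧ Ordinal.omega0 ≤ suppOrderType x ∧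
         leadCoeff x = 1}) := by
  set S : Set (HahnSeries Γᵒᵈ ℝ) :=
    ({x | (∃ (y : Γ) (r : ℝ), x = tpow y r) ∧ x ∈ G} ∪
     {x | x ∈ G ∧ Order.IsSuccLimit (suppOrderType x) ∧ Ordinal.omega0 ≤ suppOrderType x ∧
       leadCoeff x = 1}) with hS
  have hSG : S ⊆ (G : Set (HahnSeries Γᵒᵈ ℝ)) := by
    rintro z (⟨_, hz⟩ | ⟨hz, _⟩) <;> exact hz
  have key : ∀ o : Ordinal, ∀ x : HahnSeries Γᵒᵈ ℝ, suppOrderType x = o → x ∈ G →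
      x ∈ AddSubgroup.closure S := by
    intro o
    induction o using Ordinal.induction with
    | h o ih =>
      intro x hxo hxG
      subst hxo
      by_cases hx0 : x = 0
      · subst hx0; exact zero_mem _
      have hne : x.support.Nonempty := HahnSeries.support_nonempty_iff.2 hx0
      by_cases hmax : ∃ m ∈ x.support, ∀ a ∈ x.support, a ≤ m
      · -- the support has a greatest element (in Γᵒᵈ), i.e. a least exponent
        obtain ⟨m, hm, hmx⟩ := hmax
        set y := _root_.htrunc x (OrderDual.ofDual m) with hy
        have hcoeff : ∀ g : Γᵒᵈ, y.coeff g = if g < m then x.coeff g else 0 := by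
          intro g
          rw [hy, htrunc_coeff]
          rfl
        have hysupp : y.support = {g ∈ x.support | g < m} := by
          ext g
          simp only [HahnSeries.mem_support, hcoeff, Set.mem_setOf_eq]
          by_cases hg : g < m
          · simp [hg]
          · simp [hg]
        have hyG : y ∈ G := htrunc x hxG (OrderDual.ofDual m)
        have hdec : x = y + HahnSeries.single m (x.coeff m) := by
          ext g
          rw [HahnSeries.coeff_add, hcoeff, HahnSeries.coeff_single]
          rcases lt_trichotomy g m with h | h | h
          · simp [h, ne_of_lt h]
          · simp [h]
          · have hg : g ∉ x.support := fun hg => absurd (hmx g hg) (not_le.2 h)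
            simp only [HahnSeries.mem_support, not_not] at hg
            simp [not_lt.2 h.le, ne_of_gt h, hg]
        have hsingG : HahnSeries.single m (x.coeff m) ∈ G := by
          have : HahnSeries.single m (x.coeff m) = x - y := eq_sub_of_add_eq' hdec.symm
          rw [this]; exact sub_mem hxG hyG
        have hsingS : HahnSeries.single m (x.coeff m) ∈ S := by
          rw [hS]
          exact Or.inl ⟨⟨OrderDual.ofDual m, x.coeff m, rfl⟩, hsingG⟩
        have hyC : y ∈ AddSubgroup.closure S :=
          ih _ (suppOrderType_lt hm hysupp) y rfl hyG
        rw [hdec]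
        exact add_mem hyC (AddSubgroup.subset_closure hsingS)
      · -- the support has no greatest element
        push_neg at hmax
        have hnomax : ∀ a ∈ x.support, ∃ b ∈ x.support, a < b := by
          intro a ha
          obtain ⟨b, hb, hab⟩ := hmax a ha
          exact ⟨b, hb, hab⟩
        have hlim : Order.IsSuccLimit (suppOrderType x) := suppOrderType_isLimit hne hnomax
        set m := x.isWF_support.min hne with hmdef
        have hm : m ∈ x.support := x.isWF_support.min_mem hne
        set r := x.coeff m with hrdef
        have hr : r ≠ 0 := hm
        -- the second element of the support
        have hS'wf : ({g ∈ x.support | m < g} : Set Γᵒᵈ).IsWF :=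
          x.isWF_support.mono (Set.sep_subset _ _)
        have hS'ne : ({g ∈ x.support | m < g} : Set Γᵒᵈ).Nonempty := by
          obtain ⟨b, hb, hmb⟩ := hnomax m hm
          exact ⟨b, hb, hmb⟩
        set m' := hS'wf.min hS'ne with hm'def
        have hm' : m' ∈ ({g ∈ x.support | m < g} : Set Γᵒᵈ) := hS'wf.min_mem hS'ne
        have htr : _root_.htrunc x (OrderDual.ofDual m') = HahnSeries.single m r := by
          ext g
          rw [htrunc_coeff, HahnSeries.coeff_single]
          by_cases hg : g = m
          · rw [hg, if_pos rfl, if_pos (show OrderDual.ofDual m' < OrderDual.ofDual m from hm'.2)]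
          · rw [if_neg hg]
            by_cases hg' : g < m'
            · rw [if_pos (show OrderDual.ofDual m' < OrderDual.ofDual g from hg')]
              by_contra hgs
              have hgsupp : g ∈ x.support := hgs
              have hmg : m < g := lt_of_le_of_ne (x.isWF_support.min_le hne hgsupp)
                (fun h => hg h.symm)
              exact absurd hg' (not_lt.2 (hS'wf.min_le hS'ne ⟨hgsupp, hmg⟩))
            · rw [if_neg (show ¬ OrderDual.ofDual m' < OrderDual.ofDual g from hg')]
        have h1 : HahnSeries.single m r ∈ G := htr ▸ htrunc x hxG (OrderDual.ofDual m')
        have h2 : HahnSeries.single m (1 : ℝ) ∈ G := hcross (OrderDual.ofDual m)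
        have h3 : HahnSeries.single m (r - 1) ∈ G := by
          have : HahnSeries.single m (r - 1)
              = HahnSeries.single m r - HahnSeries.single m (1 : ℝ) := by
            ext g
            rw [HahnSeries.coeff_sub, HahnSeries.coeff_single, HahnSeries.coeff_single,
              HahnSeries.coeff_single]
            split <;> ring
          rw [this]; exact sub_mem h1 h2
        set x' := x - HahnSeries.single m (r - 1) with hx'def
        have hx'G : x' ∈ G := sub_mem hxG h3
        have hx'coeff : ∀ g, x'.coeff g = if g = m then 1 else x.coeff g := by
          intro g
          rw [hx'def, HahnSeries.coeff_sub, HahnSeries.coeff_single]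
          by_cases hg : g = m
          · subst hg; simp [← hrdef]
          · simp [hg]
        have hsupp : x'.support = x.support := by
          ext g
          simp only [HahnSeries.mem_support, hx'coeff]
          by_cases hg : g = m
          · subst hg; simpa using hr
          · simp [hg]
        have hx'0 : x' ≠ 0 := by
          intro h
          have := hx'coeff m
          rw [h] at this
          simp at this
        have hminx' : x'.isWF_support.min (HahnSeries.support_nonempty_iff.2 hx'0) = m := by
          apply le_antisymm
          · exact x'.isWF_support.min_le _ (hsupp ▸ hm)
          · have hmem : x'.isWF_support.min (HahnSeries.support_nonempty_iff.2 hx'0)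
                ∈ x.support := hsupp ▸ x'.isWF_support.min_mem _
            exact x.isWF_support.min_le hne hmem
        have hx'lead : leadCoeff x' = 1 := by
          rw [leadCoeff, dif_neg hx'0, hminx', hx'coeff]
          simp
        have hx'S : x' ∈ S := by
          rw [hS]
          refine Or.inr ⟨hx'G, ?_, ?_, hx'lead⟩
          · rw [← suppOrderType_congr hsupp] at hlim; exact hlim
          · rw [← suppOrderType_congr hsupp] at hlim
            exact Ordinal.omega0_le_of_isSuccLimit hlim
        have hsingS : HahnSeries.single m (r - 1) ∈ S := by
          rw [hS]
          exact Or.inl ⟨⟨OrderDual.ofDual m, r - 1, rfl⟩, h3⟩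
        have : x = x' + HahnSeries.single m (r - 1) := by rw [hx'def]; abel
        rw [this]
        exact add_mem (AddSubgroup.subset_closure hx'S) (AddSubgroup.subset_closure hsingS)
  apply le_antisymm
  · intro x hx
    exact key (suppOrderType x) x rfl hx
  · exact AddSubgroup.closure_le G |>.2 hSG
end

section
/- Let ⟨A, <, <_s⟩ be a lexicographically ordered binary tree. Then for all x, y ∈ A: x <_s y if and only if y ≠ x and L_s(x) < {y} < R_s(x) (i.e., a < y for every a ∈ L_s(x) and y < a for every a ∈ R_s(x)). -/
universe u

/-- In a lexicographically ordered binary tree, `x <_s y` iff `y ≠ x` and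
`L_s(x) < {y} < R_s(x)`. -/
theorem stmt12 {α : Type u} [LinearOrder α] (s : α → α → Prop)
    (h : IsLexBinTree s) (x y : α) :
    s x y ↔ y ≠ x ∧ (∀ a ∈ Lopts s x, a < y) ∧ (∀ a ∈ Ropts s x, y < a) := by
  have ht := h.toIsBinaryTree.toIsTreeOrd
  constructor
  · intro hxy
    have hne : y ≠ x := by rintro rfl; exact ht.irrefl _ hxy
    refine ⟨hne, ?_, ?_⟩
    · rintro a ⟨hax, halt⟩
      rcases lt_trichotomy a y with h1 | h1 | h1
      · exact h1
      · subst h1; exact absurd (ht.trans hxy hax) (ht.irrefl x)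
      · exact absurd hxy ((h.lex x y hne.symm).mpr
          ⟨a, hax, ht.trans hax hxy, Or.inr ⟨h1, halt⟩⟩).1
    · rintro a ⟨hax, halt⟩
      rcases lt_trichotomy y a with h1 | h1 | h1
      · exact h1
      · subst h1; exact absurd (ht.trans hxy hax) (ht.irrefl x)
      · exact absurd hxy ((h.lex x y hne.symm).mpr
          ⟨a, hax, ht.trans hax hxy, Or.inl ⟨halt, h1⟩⟩).1
  · rintro ⟨hne, hL, hR⟩
    by_contra hns
    by_cases hyx : s y x
    · rcases lt_trichotomy y x with h1 | h1 | h1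
      · exact absurd (hL y ⟨hyx, h1⟩) (lt_irrefl y)
      · exact hne h1
      · exact absurd (hR y ⟨hyx, h1⟩) (lt_irrefl y)
    · obtain ⟨z, hzx, hzy, hor⟩ := (h.lex x y hne.symm).mp ⟨hns, hyx⟩
      rcases hor with ⟨hxz, hzy'⟩ | ⟨hyz, hzx'⟩
      · exact absurd (hR z ⟨hzx, hxz⟩) (not_lt.2 hzy'.le)
      · exact absurd (hL z ⟨hzx, hzx'⟩) (not_lt.2 hyz.le)
end

section
/- Let ⟨A, <, <_s⟩ be a lexicographically ordered binary tree and suppose f : A → A is an injection such that for all x, y ∈ A, x < y if and only if f(x) < f(y), and x <_s y if and only if f(x) <_s f(y), and suppose the image f(A), with the induced relations, is an initial subtree of A. Then f(A) = A; that is, no lexicographically ordered binary tree is isomorphic to a proper initial ordered subtree of itself. -/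
universe u

section Stmt16Aux

variable {α : Type u}

theorem stmt16_rank_eq_typein {s : α → α → Prop} (ht : IsTreeOrd s) {x z : α} (hz : s z x) :
    treeRank s ht z =
      (@Ordinal.typein (treePred s x) (fun a b => s a.1 b.1) (ht.predWO x)) ⟨z, hz⟩ := by
  haveI := ht.predWO x
  haveI := ht.predWO z
  rw [← Ordinal.type_subrel]
  refine Ordinal.type_eq.2 ⟨?_⟩
  exact ⟨⟨fun y => ⟨⟨y.1, ht.trans y.2 hz⟩, y.2⟩, fun y => ⟨y.1.1, y.2⟩,
    fun y => rfl, fun y => rfl⟩, Iff.rfl⟩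

theorem stmt16_rank_lt {s : α → α → Prop} (ht : IsTreeOrd s) {x z : α} (hz : s z x) :
    treeRank s ht z < treeRank s ht x := by
  haveI := ht.predWO x
  rw [stmt16_rank_eq_typein ht hz]
  exact Ordinal.typein_lt_type _ _

theorem stmt16_exists_rank {s : α → α → Prop} (ht : IsTreeOrd s) {x : α} {c : Ordinal}
    (hc : c < treeRank s ht x) : ∃ p, s p x ∧ treeRank s ht p = c := by
  haveI := ht.predWO x
  have hc' : c < Ordinal.type (fun a b : treePred s x => s a.1 b.1) := hc
  refine ⟨(Ordinal.enum _ ⟨c, hc'⟩ : treePred s x).1,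
    (Ordinal.enum _ ⟨c, hc'⟩ : treePred s x).2, ?_⟩
  rw [stmt16_rank_eq_typein ht (Ordinal.enum _ ⟨c, hc'⟩ : treePred s x).2]
  exact Ordinal.typein_enum _ hc'

theorem stmt16_rank_congr {s : α → α → Prop} (ht : IsTreeOrd s) {u v : α}
    (huv : treePred s u = treePred s v) : treeRank s ht u = treeRank s ht v := by
  haveI := ht.predWO u
  haveI := ht.predWO v
  exact Ordinal.type_eq.2 ⟨⟨Equiv.setCongr huv, Iff.rfl⟩⟩

end Stmt16Aux

/-- No lexicographically ordered binary tree is isomorphic to a proper initial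
ordered subtree of itself. -/
theorem stmt16 {α : Type u} [LinearOrder α] (s : α → α → Prop)
    (h : IsLexBinTree s) (f : α → α) (hinj : Function.Injective f)
    (hord : ∀ x y : α, x < y ↔ f x < f y)
    (htree : ∀ x y : α, s x y ↔ s (f x) (f y))
    (hinit : IsInitialSubtree s (Set.range f)) :
    Set.range f = Set.univ := by
  have ht : IsTreeOrd s := h.toIsBinaryTree.toIsTreeOrd
  have key : ∀ β : Ordinal, ∀ x : α, treeRank s ht x = β → f x = x := by
    intro β
    induction β using Ordinal.induction with
    | h β IH =>
      intro x hx
      have IH' : ∀ w : α, treeRank s ht w < treeRank s ht x → f w = w := fun w hw =>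
        IH _ (hx ▸ hw) w rfl
      have predfix : ∀ w : α, s w x → f w = w := fun w hw => IH' w (stmt16_rank_lt ht hw)
      have pred_eq : ∀ u : α, (∀ w, s w u → f w = w) → treePred s (f u) = treePred s u := by
        intro u hu
        ext z
        constructor
        · intro hz
          obtain ⟨w, rfl⟩ := hinit (f u) ⟨u, rfl⟩ z hz
          have hwu : s w u := (htree w u).2 hz
          show s (f w) u
          rw [hu w hwu]
          exact hwu
        · intro hz
          have : s (f z) (f u) := (htree z u).1 hz
          show s z (f u)
          rw [← hu z hz]
          exact this
      by_contra hne
      have Px : treePred s (f x) = treePred s x := pred_eq x predfix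
      have rank_fx : treeRank s ht (f x) = treeRank s ht x := stmt16_rank_congr ht Px
      have predfix2 : ∀ w : α, s w (f x) → f w = w := fun w hw =>
        IH' w (rank_fx ▸ stmt16_rank_lt ht hw)
      have Pxx : treePred s (f (f x)) = treePred s x := (pred_eq (f x) predfix2).trans Px
      have rank_ffx : treeRank s ht (f (f x)) = treeRank s ht x := stmt16_rank_congr ht Pxx
      have hne2 : f (f x) ≠ f x := fun e => hne (hinj e)
      have hne3 : f (f x) ≠ x := by
        rcases lt_or_gt_of_ne hne with hl | hl
        · exact ne_of_lt (lt_trans ((hord (f x) x).1 hl) hl)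
        · exact ne_of_gt (lt_trans hl ((hord x (f x)).1 hl))
      rcases Ordinal.zero_or_succ_or_isSuccLimit (treeRank s ht x) with h0 | ⟨γ, hsucc⟩ | hlim
      · -- rank 0 : x and f x are incomparable roots, contradicting lex
        have hnsx : ¬ s x (f x) := fun hs =>
          absurd (rank_fx ▸ stmt16_rank_lt ht hs) (lt_irrefl _)
        have hnsfx : ¬ s (f x) x := fun hs =>
          absurd (rank_fx ▸ stmt16_rank_lt ht hs) (lt_irrefl _)
        obtain ⟨z, hz1, -, -⟩ := (h.lex x (f x) (Ne.symm hne)).1 ⟨hnsx, hnsfx⟩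
        exact absurd (stmt16_rank_lt ht hz1) (by rw [h0]; simp)
      · -- successor rank : x, f x, f (f x) are three immediate successors of p
        obtain ⟨p, hpx, hrp⟩ := stmt16_exists_rank ht (x := x) (c := γ)
          (by rw [← hsucc]; exact Order.lt_succ γ)
        have hpfx : s p (f x) := show p ∈ treePred s (f x) from Px.symm ▸ hpx
        have hpffx : s p (f (f x)) := show p ∈ treePred s (f (f x)) from Pxx.symm ▸ hpx
        have hrk : treeRank s ht x = treeRank s ht p + 1 := by
          rw [← hsucc, hrp, Ordinal.add_one_eq_succ]
        have I1 : IsImmSucc s ht p x := ⟨hpx, hrk⟩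
        have I2 : IsImmSucc s ht p (f x) := ⟨hpfx, rank_fx.trans hrk⟩
        have I3 : IsImmSucc s ht p (f (f x)) := ⟨hpffx, rank_ffx.trans hrk⟩
        rcases h.toIsBinaryTree.succ_binary p x (f x) (f (f x)) I1 I2 I3 with e | e | e
        · exact hne e.symm
        · exact hne3 e.symm
        · exact hne2 e.symm
      · -- limit rank : x and f x are both immediate successors of the chain treePred s x
        haveI := ht.predWO x
        have hchain : IsLimitChain s (treePred s x) := by
          refine ⟨fun a ha b hb hab => ?_, ht.predWO x, hlim⟩
          rcases trichotomous_of (fun a b : treePred s x => s a.1 b.1) ⟨a, ha⟩ ⟨b, hb⟩ with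
            hc | hc | hc
          · exact Or.inl hc
          · exact absurd (congrArg Subtype.val hc) hab
          · exact Or.inr hc
        have least : IsLeast {o : Ordinal | ∀ p ∈ treePred s x, treeRank s ht p < o}
            (treeRank s ht x) := by
          constructor
          · exact fun p hp => stmt16_rank_lt ht hp
          · intro o ho
            apply le_of_forall_lt
            intro c hc
            obtain ⟨p, hpx, hrp⟩ := stmt16_exists_rank ht hc
            exact hrp ▸ ho p hpx
        have Ix : IsChainImmSucc s ht (treePred s x) x := ⟨fun p hp => hp, least⟩
        have Ifx : IsChainImmSucc s ht (treePred s x) (f x) :=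
          ⟨fun p hp => show p ∈ treePred s (f x) from Px.symm ▸ hp, rank_fx.symm ▸ least⟩
        exact hne (h.toIsBinaryTree.chain_succ_unique _ hchain (f x) x Ifx Ix)
  refine Set.eq_univ_of_forall fun x => ⟨x, key _ x rfl⟩
end
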